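/- arXiv:2302.09047 — 3 statements merged into one kernel-verified Lean document; each statement's English description precedes it below -/
import Mathlib

section
/- For a uniformly random subset S of {0,1}^n, the second moment of the number X_r of r-dimensional subcubes contained in S equals Σ_{i=0}^{r} [n! · 2^{n-i} / (i! · (r-i)!² · (n-2r+i)! · 2^{2^{r+1}})] · (2^{2^i} − 1) + [(n choose r) · 2^{n-r}]² / 2^{2^{r+1}}, for n ≥ 2r. -/
open Finset

def cube {n : ℕ} (w : Fin n → Option Bool) : Finset (Fin n → Bool) :=
  Finset.univ.filter fun x => ∀ i, ∀ b, w i = some b → x i = b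

def Word (n r : ℕ) : Finset (Fin n → Option Bool) :=
  Finset.univ.filter fun w => (Finset.univ.filter fun i => w i = none).card = r

/-- Expectation with respect to a uniformly random subset `S ⊆ {0,1}^n`. -/
noncomputable def Ex (n : ℕ) (f : Finset (Fin n → Bool) → ℝ) : ℝ :=
  (∑ S : Finset (Fin n → Bool), f S) / (Fintype.card (Finset (Fin n → Bool)))

/-- The number of `r`-dimensional subcubes contained in `S`. -/
def Xr (n r : ℕ) (S : Finset (Fin n → Bool)) : ℕ :=
  ((Word n r).filter fun w => cube w ⊆ S).card

/-!
Expanding the square, `X_r(S)²` counts ordered pairs of `r`-subcubes `C, C'` lying in `S`, so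
`E[X_r²] = ∑ 2^{-|C ∪ C'|} = 2^{-2^{r+1}} ∑ 2^{|C ∩ C'|}`. Two subcubes meet exactly when their
words are compatible (no coordinate fixed to different values), and then `C ∩ C'` is a subcube
of dimension `i`, the number of common free coordinates. Splitting
`2^{|C ∩ C'|} = 1 + (2^{|C ∩ C'|} - 1)` leaves `|Word n r|²` plus, for each `i ≤ r`,
`2^{2^i} - 1` times the number of compatible pairs with `i` common free coordinates, which is
`C(n,r) 2^{n-r} · C(r,i) C(n-r,r-i) 2^{r-i} = n! 2^{n-i} / (i! (r-i)!² (n-2r+i)!)`.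
-/

lemma card_filter_card_eq_card_inter_eq {α : Type*} [Fintype α] [DecidableEq α] (N : Finset α)
    {i r : ℕ} (hi : i ≤ r) :
    #{A : Finset α | #A = r ∧ #(N ∩ A) = i} = (#N).choose i * (#Nᶜ).choose (r - i) := by
  rw [← card_powersetCard, ← card_powersetCard, ← card_product]
  refine card_nbij' (fun A => (N ∩ A, A \ N)) (fun p => p.1 ∪ p.2) ?_ ?_ ?_ ?_
  · intro A hA
    simp only [coe_filter, mem_univ, true_and, Set.mem_ofPred_eq] at hA
    have hsplit := card_inter_add_card_sdiff A N
    simp only [coe_product, Set.mem_prod, mem_coe, mem_powersetCard]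
    refine ⟨⟨inter_subset_left, hA.2⟩, fun a ha => by simp_all, ?_⟩
    rw [inter_comm] at hA
    omega
  · rintro ⟨B, C⟩ hp
    simp only [coe_product, Set.mem_prod, mem_coe, mem_powersetCard] at hp
    obtain ⟨⟨hBN, hB⟩, hCN, hC⟩ := hp
    have hdisj : Disjoint B C := by grind [mem_compl, disjoint_left]
    have hNBC : N ∩ (B ∪ C) = B := by grind [mem_compl]
    simp only [coe_filter, mem_univ, true_and, Set.mem_ofPred_eq]
    rw [card_union_of_disjoint hdisj, hNBC]
    omega
  · intro A _
    grind
  · rintro ⟨B, C⟩ hp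
    simp only [coe_product, Set.mem_prod, mem_coe, mem_powersetCard] at hp
    simp only [Prod.mk.injEq]
    grind [mem_compl]

open Nat in
lemma choose_mul_choose_mul_choose_mul_factorial {n r i : ℕ} (hi : i ≤ r) (h : 2 * r ≤ n) :
    n.choose r * (r.choose i * (n - r).choose (r - i)) * (i ! * (r - i)! ^ 2 * (n - 2 * r + i)!)
      = n ! := by
  have hsub : n - r - (r - i) = n - 2 * r + i := by omega
  calc n.choose r * (r.choose i * (n - r).choose (r - i)) * (i ! * (r - i)! ^ 2 * (n - 2 * r + i)!)
      = n.choose r * (r.choose i * i ! * (r - i)!)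
          * ((n - r).choose (r - i) * (r - i)! * (n - r - (r - i))!) := by rw [hsub]; ring
    _ = n ! := by
      rw [choose_mul_factorial_mul_factorial hi, choose_mul_factorial_mul_factorial (by omega),
        choose_mul_factorial_mul_factorial (by omega)]

lemma card_filter_superset {α : Type*} [Fintype α] [DecidableEq α] (T : Finset α) :
    #{S : Finset α | T ⊆ S} = 2 ^ (Fintype.card α - #T) := by
  rw [← card_univ, ← card_Icc_finset (subset_univ T)]
  congr 1
  ext S
  simp

section Subcubes

variable {n : ℕ}

def coordSet : Option Bool → Finset Bool
  | none => univ
  | some b => {b}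

def freeCoords (w : Fin n → Option Bool) : Finset (Fin n) := {i | w i = none}

def Compatible (w w' : Fin n → Option Bool) : Prop :=
  ∀ i, w i = none ∨ w' i = none ∨ w i = w' i

instance : DecidableRel (Compatible (n := n)) :=
  fun _ _ => inferInstanceAs (Decidable (∀ _, _))

lemma mem_Word {r : ℕ} {w : Fin n → Option Bool} : w ∈ Word n r ↔ #(freeCoords w) = r := by
  simp [Word, freeCoords]

lemma cube_eq_piFinset (w : Fin n → Option Bool) :
    cube w = Fintype.piFinset fun i => coordSet (w i) := by
  ext x
  simp only [cube, mem_filter, mem_univ, true_and, Fintype.mem_piFinset]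
  refine forall_congr' fun i => ?_
  cases w i with
  | none => simp [coordSet]
  | some b => simp [coordSet, eq_comm]

lemma card_coordSet_inter {o o' : Option Bool} (h : o = none ∨ o' = none ∨ o = o') :
    #(coordSet o ∩ coordSet o') = if o = none ∧ o' = none then 2 else 1 := by
  rcases o with _ | b <;> rcases o' with _ | b' <;> simp_all [coordSet]

lemma card_cube_inter_of_compatible {w w' : Fin n → Option Bool} (h : Compatible w w') :
    #(cube w ∩ cube w') = 2 ^ #(freeCoords w ∩ freeCoords w') := by
  rw [cube_eq_piFinset, cube_eq_piFinset, ← Fintype.piFinset_inter, Fintype.card_piFinset,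
    prod_congr rfl fun i _ => card_coordSet_inter (h i), prod_ite, prod_const, prod_const_one,
    mul_one, freeCoords, freeCoords, filter_and]

lemma card_cube (w : Fin n → Option Bool) : #(cube w) = 2 ^ #(freeCoords w) := by
  simpa using card_cube_inter_of_compatible (w := w) (w' := w) fun _ => Or.inr (Or.inr rfl)

lemma cube_inter_eq_empty_of_not_compatible {w w' : Fin n → Option Bool}
    (h : ¬ Compatible w w') : cube w ∩ cube w' = ∅ := by
  simp only [Compatible, not_forall, not_or] at h
  obtain ⟨i, hw, hw', hne⟩ := h
  obtain ⟨b, hb⟩ := Option.ne_none_iff_exists'.mp hw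
  obtain ⟨b', hb'⟩ := Option.ne_none_iff_exists'.mp hw'
  refine eq_empty_of_forall_notMem fun x hx => hne ?_
  simp only [cube, mem_inter, mem_filter, mem_univ, true_and] at hx
  rw [hb, hb', ← hx.1 i b hb, ← hx.2 i b' hb']

lemma filter_compatible_freeCoords_eq (w : Fin n → Option Bool) (A : Finset (Fin n)) :
    ({w' | Compatible w w' ∧ freeCoords w' = A} : Finset _)
      = Fintype.piFinset fun j =>
          {o | (w j = none ∨ o = none ∨ w j = o) ∧ (o = none ↔ j ∈ A)} := by
  ext w'
  simp [Compatible, freeCoords, Finset.ext_iff, forall_and]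

lemma card_filter_compatible_freeCoords_eq (w : Fin n → Option Bool) (A : Finset (Fin n)) :
    #{w' | Compatible w w' ∧ freeCoords w' = A} = 2 ^ #(freeCoords w \ A) := by
  have hslot : ∀ j, #{o : Option Bool | (w j = none ∨ o = none ∨ w j = o) ∧ (o = none ↔ j ∈ A)}
      = if j ∈ freeCoords w \ A then 2 else 1 := by
    intro j
    rcases hw : w j with _ | _ | _ <;> by_cases hj : j ∈ A <;> simp [freeCoords, hj, hw] <;> decide
  rw [filter_compatible_freeCoords_eq, Fintype.card_piFinset, prod_congr rfl fun j _ => hslot j,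
    prod_ite_mem, univ_inter, prod_const]

lemma card_filter_compatible_freeCoords_mem (w : Fin n → Option Bool)
    (𝒜 : Finset (Finset (Fin n))) :
    #{w' | Compatible w w' ∧ freeCoords w' ∈ 𝒜} = ∑ A ∈ 𝒜, 2 ^ #(freeCoords w \ A) := by
  rw [card_eq_sum_card_fiberwise (f := freeCoords) fun w' hw' => (mem_filter.mp hw').2.2]
  refine sum_congr rfl fun A hA => ?_
  rw [filter_filter, ← card_filter_compatible_freeCoords_eq]
  congr 1
  refine filter_congr fun w' _ => ?_
  constructor
  · exact fun h => ⟨h.1.1, h.2⟩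
  · rintro ⟨h, rfl⟩; exact ⟨⟨h, hA⟩, rfl⟩

lemma card_Word (r : ℕ) : #(Word n r) = n.choose r * 2 ^ (n - r) := by
  have hWord : Word n r
      = ({w | Compatible (fun _ => none) w ∧ freeCoords w ∈ powersetCard r univ} : Finset _) := by
    ext w
    simp [mem_Word, Compatible]
  have hfree : freeCoords (fun _ : Fin n => none) = univ := by simp [freeCoords]
  rw [hWord, card_filter_compatible_freeCoords_mem, hfree,
    sum_congr rfl fun A hA => by
      rw [← compl_eq_univ_sdiff, card_compl, Fintype.card_fin, (mem_powersetCard.mp hA).2],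
    sum_const, card_powersetCard, card_univ, Fintype.card_fin, smul_eq_mul]

-- `w'` keeps `i` of the free coordinates of `w` free, frees `r - i` of its fixed ones, and fixes
-- the remaining `r - i` free coordinates of `w` arbitrarily.
lemma card_compatible_neighbours {r i : ℕ} (hi : i ≤ r) {w : Fin n → Option Bool}
    (hw : w ∈ Word n r) :
    #{w' ∈ Word n r | Compatible w w' ∧ #(freeCoords w ∩ freeCoords w') = i}
      = r.choose i * (n - r).choose (r - i) * 2 ^ (r - i) := by
  rw [mem_Word] at hw
  have hfilter : {w' ∈ Word n r | Compatible w w' ∧ #(freeCoords w ∩ freeCoords w') = i}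
      = ({w' | Compatible w w' ∧
          freeCoords w' ∈ ({A | #A = r ∧ #(freeCoords w ∩ A) = i} : Finset _)} : Finset _) := by
    ext w'
    simp only [mem_filter, mem_univ, true_and, mem_Word]
    tauto
  rw [hfilter, card_filter_compatible_freeCoords_mem, sum_congr rfl fun A hA => by
      rw [card_sdiff, inter_comm, (mem_filter.mp hA).2.2, hw],
    sum_const, smul_eq_mul, card_filter_card_eq_card_inter_eq _ hi, card_compl, Fintype.card_fin,
    hw]

lemma card_compatible_pairs {r i : ℕ} (hi : i ≤ r) :
    #{p ∈ Word n r ×ˢ Word n r | Compatible p.1 p.2 ∧ #(freeCoords p.1 ∩ freeCoords p.2) = i}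
      = #(Word n r) * (r.choose i * (n - r).choose (r - i) * 2 ^ (r - i)) := by
  rw [card_filter, sum_product, ← sum_const_nat fun w hw => by
    rw [← card_compatible_neighbours hi hw, card_filter]]

lemma Ex_sum {ι : Type*} (s : Finset ι) (f : ι → Finset (Fin n → Bool) → ℝ) :
    Ex n (fun S => ∑ p ∈ s, f p S) = ∑ p ∈ s, Ex n (f p) := by
  simp only [Ex, sum_div]
  exact sum_comm

lemma Ex_indicator_subset (T : Finset (Fin n → Bool)) :
    Ex n (fun S => if T ⊆ S then 1 else 0) = 1 / 2 ^ #T := by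
  have hT : #T ≤ 2 ^ n := by simpa using card_le_univ T
  rw [Ex, sum_boole, card_filter_superset, Fintype.card_finset, Fintype.card_fun,
    Fintype.card_bool, Fintype.card_fin, div_eq_div_iff (by positivity) (by positivity)]
  push_cast
  rw [one_mul, ← pow_add, Nat.sub_add_cancel hT]

lemma sq_Xr_eq_sum (r : ℕ) (S : Finset (Fin n → Bool)) :
    (Xr n r S : ℝ) ^ 2
      = ∑ p ∈ Word n r ×ˢ Word n r, if cube p.1 ∪ cube p.2 ⊆ S then 1 else 0 := by
  rw [Xr, card_filter, sq, Nat.cast_sum, sum_mul_sum, ← sum_product']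
  refine sum_congr rfl fun p _ => ?_
  simp only [union_subset_iff, ite_and]
  split_ifs <;> simp

lemma inv_two_pow_card_cube_union {r : ℕ} {w w' : Fin n → Option Bool} (hw : w ∈ Word n r)
    (hw' : w' ∈ Word n r) :
    1 / (2 : ℝ) ^ #(cube w ∪ cube w') = 2 ^ #(cube w ∩ cube w') / 2 ^ 2 ^ (r + 1) := by
  have hsum : #(cube w ∪ cube w') + #(cube w ∩ cube w') = 2 ^ (r + 1) := by
    rw [card_union_add_card_inter, card_cube, card_cube, mem_Word.mp hw, mem_Word.mp hw', pow_succ,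
      mul_two]
  rw [div_eq_div_iff (by positivity) (by positivity), one_mul, ← pow_add,
    add_comm _ #(cube w ∪ cube w'), hsum]

lemma sum_two_pow_card_cube_inter (r : ℕ) :
    ∑ p ∈ Word n r ×ˢ Word n r, (2 : ℝ) ^ #(cube p.1 ∩ cube p.2)
      = ∑ i ∈ range (r + 1),
          (#{p ∈ Word n r ×ˢ Word n r |
              Compatible p.1 p.2 ∧ #(freeCoords p.1 ∩ freeCoords p.2) = i} : ℝ) * (2 ^ 2 ^ i - 1)
        + (#(Word n r) : ℝ) ^ 2 := by
  have hterm : ∀ p ∈ Word n r ×ˢ Word n r, (2 : ℝ) ^ #(cube p.1 ∩ cube p.2)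
      = (∑ i ∈ range (r + 1), if Compatible p.1 p.2 ∧ #(freeCoords p.1 ∩ freeCoords p.2) = i
          then (2 : ℝ) ^ 2 ^ i - 1 else 0) + 1 := by
    rintro ⟨w, w'⟩ hp
    by_cases h : Compatible w w'
    · have hle : #(freeCoords w ∩ freeCoords w') < r + 1 := by
        rw [Nat.lt_succ_iff, ← mem_Word.mp (mem_product.mp hp).1]
        exact card_le_card inter_subset_left
      simp [h, card_cube_inter_of_compatible h, hle]
    · simp [h, cube_inter_eq_empty_of_not_compatible h]
  rw [sum_congr rfl hterm, sum_add_distrib, sum_comm, sum_const, card_product, nsmul_one,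
    Nat.cast_mul, ← sq]
  congr 1
  exact sum_congr rfl fun i _ => by rw [← sum_filter, sum_const, nsmul_eq_mul]

open Nat in
lemma cast_card_compatible_pairs {r i : ℕ} (hi : i ≤ r) (h : 2 * r ≤ n) :
    (#{p ∈ Word n r ×ˢ Word n r |
        Compatible p.1 p.2 ∧ #(freeCoords p.1 ∩ freeCoords p.2) = i} : ℝ)
      = n ! * 2 ^ (n - i) / (i ! * (r - i)! ^ 2 * (n - 2 * r + i)!) := by
  rw [card_compatible_pairs hi, card_Word, eq_div_iff (by positivity),
    ← choose_mul_choose_mul_choose_mul_factorial hi h, show n - i = (n - r) + (r - i) by omega]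
  push_cast
  ring

end Subcubes

open Nat in
/-- Thanatipanonda's formula for the second moment of the number of
`r`-dimensional subcubes contained in a uniformly random subset of `{0,1}^n`. -/
theorem second_moment_Xr (n r : ℕ) (h : 2 * r ≤ n) :
    Ex n (fun S => (Xr n r S : ℝ) ^ 2)
      = (∑ i ∈ Finset.range (r + 1),
          (n ! : ℝ) * 2 ^ (n - i)
            / ((i ! : ℝ) * ((r - i)! : ℝ) ^ 2 * ((n - 2 * r + i)! : ℝ) * 2 ^ (2 ^ (r + 1)))
            * (2 ^ (2 ^ i) - 1))
        + ((n.choose r : ℝ) * 2 ^ (n - r)) ^ 2 / 2 ^ (2 ^ (r + 1)) := by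
  calc Ex n (fun S => (Xr n r S : ℝ) ^ 2)
      = ∑ p ∈ Word n r ×ˢ Word n r, 1 / (2 : ℝ) ^ #(cube p.1 ∪ cube p.2) := by
        simp only [sq_Xr_eq_sum, Ex_sum, Ex_indicator_subset]
    _ = (∑ p ∈ Word n r ×ˢ Word n r, (2 : ℝ) ^ #(cube p.1 ∩ cube p.2)) / 2 ^ 2 ^ (r + 1) := by
        rw [sum_div]
        exact sum_congr rfl fun p hp =>
          inv_two_pow_card_cube_union (mem_product.mp hp).1 (mem_product.mp hp).2
    _ = _ := by
        rw [sum_two_pow_card_cube_inter, add_div, sum_div, card_Word]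
        push_cast
        congr 1
        refine sum_congr rfl fun i hi => ?_
        rw [cast_card_compatible_pairs (Nat.lt_succ_iff.mp (mem_range.mp hi)) h]
        field_simp
end

section
/- For a uniformly random subset S of {0,1}^n with n ≥ 1, the number X_1 of edges (1-dimensional subcubes) contained in S has third moment E[X_1³] = 2^n · n² · ((2^n)² n + 12·2^n·n + 6·2^n + 24 n) / 512. -/
open Finset

/-!
Encode `S` by the signs `σ_v = ±1` (`spin S v`); under the uniform measure they are independent
fair signs, so the Walsh products `σ_T = ∏_{v ∈ T} σ_v` satisfy `σ_T σ_U = σ_{T ∆ U}` and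
`𝔼 σ_T = [T = ∅]`. For a `d`-regular graph with `N` edges, `4·[{a, b} ⊆ S] = (1 + σ_a)(1 + σ_b)`
gives `4 X = N + d A + B` with `A = ∑_v σ_v` and `B = ∑_e σ_e`. Complementing `S` negates `A` and
fixes `B`, so the odd powers of `A` drop out of `𝔼 (4 X)³`, and orthogonality gives `𝔼 B = 0`,
`𝔼 B² = N`, `𝔼 A² = |V|`, `𝔼 A² B = 2 N`, and `𝔼 B³ = 0` because a bipartite graph has no
triangles. Hence `64 𝔼 X³ = N³ + 3 N² + 3 d² |V| N + 6 d² N`; the hypercube has `d = n`,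
`|V| = 2ⁿ`, `2 N = n 2ⁿ`, and is bipartite by the parity of the number of ones.
-/

open scoped symmDiff

namespace RandomSubset

section Walsh

variable {α : Type*} [DecidableEq α]

def spin (S : Finset α) (v : α) : ℝ := if v ∈ S then 1 else -1

def walsh (T S : Finset α) : ℝ := ∏ v ∈ T, spin S v

lemma spin_mul_self (S : Finset α) (v : α) : spin S v * spin S v = 1 := by
  unfold spin; split_ifs <;> norm_num

lemma walsh_mul_walsh (T U S : Finset α) : walsh T S * walsh U S = walsh (T ∆ U) S := by
  have hsq : ∏ v ∈ T ∩ U, spin S v * spin S v = 1 := prod_eq_one fun v _ => spin_mul_self S v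
  rw [walsh, walsh, walsh, ← prod_union_inter,
    ← prod_sdiff (inter_subset_union (s := T) (t := U)), mul_assoc, ← prod_mul_distrib, hsq,
    mul_one, symmDiff_eq_sup_sdiff_inf]
  rfl

lemma walsh_symmDiff_singleton {T : Finset α} {v : α} (hv : v ∈ T) (S : Finset α) :
    walsh T (S ∆ {v}) = -walsh T S := by
  rw [walsh, walsh, ← mul_prod_erase T _ hv, ← mul_prod_erase T _ hv, ← neg_mul]
  congr 1
  · by_cases h : v ∈ S <;> simp [spin, mem_symmDiff, h]
  · refine prod_congr rfl fun u hu => ?_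
    simp [spin, mem_symmDiff, ne_of_mem_erase hu]

lemma four_mul_indicator_subset {e : Finset α} (he : #e = 2) (S : Finset α) :
    4 * (if e ⊆ S then 1 else 0 : ℝ) = 1 + ∑ v ∈ e, spin S v + walsh e S := by
  obtain ⟨a, b, hab, rfl⟩ := card_eq_two.1 he
  by_cases ha : a ∈ S <;> by_cases hb : b ∈ S <;>
    norm_num [walsh, spin, insert_subset_iff, hab, ha, hb]

lemma pair_eq_singleton_symmDiff_singleton_iff {a b : α} (hab : a ≠ b) (u v : α) :
    ({a, b} : Finset α) = {u} ∆ {v} ↔ (u, v) = (a, b) ∨ (u, v) = (b, a) := by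
  by_cases huv : u = v
  · subst huv
    simp only [symmDiff_self, bot_eq_empty, insert_ne_empty, false_iff, Prod.mk.injEq]
    rintro (⟨rfl, rfl⟩ | ⟨rfl, rfl⟩) <;> exact hab rfl
  · rw [symmDiff_eq_union (disjoint_singleton.2 huv), ← insert_eq, ← coe_inj, coe_pair,
      coe_pair, Set.pair_eq_pair_iff]
    simp only [Prod.mk.injEq]
    tauto

-- `walsh e S = -1` says that the edge `e` has exactly one end in `S`, i.e. `S` is one side of a
-- bipartition; the third side `e ∆ f` of a triangle would have both ends on the same side.
lemma symmDiff_notMem_of_walsh_eq_neg_one {E : Finset (Finset α)} {S : Finset α}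
    (hS : ∀ e ∈ E, walsh e S = -1) : ∀ e ∈ E, ∀ f ∈ E, e ∆ f ∉ E := by
  intro e he f hf hef
  have h := hS _ hef
  rw [← walsh_mul_walsh, hS e he, hS f hf] at h
  norm_num at h

variable [Fintype α]

lemma spin_compl (S : Finset α) (v : α) : spin Sᶜ v = -spin S v := by
  unfold spin; split_ifs <;> simp_all

lemma walsh_compl (T S : Finset α) : walsh T Sᶜ = (-1) ^ #T * walsh T S := by
  simp only [walsh, spin_compl, prod_neg]

lemma sum_walsh (T : Finset α) :
    ∑ S, walsh T S = if T = ∅ then 2 ^ Fintype.card α else 0 := by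
  split_ifs with hT
  · simp [hT, walsh, Fintype.card_finset]
  · obtain ⟨v, hv⟩ := nonempty_iff_ne_empty.2 hT
    have h := Fintype.sum_equiv (symmDiff_left_involutive ({v} : Finset α)).toPerm
      (fun S => walsh T (S ∆ {v})) (walsh T) fun _ => by simp
    simp only [walsh_symmDiff_singleton hv, sum_neg_distrib] at h
    linarith

variable {ι κ μ : Type*}

lemma sum_walshSum_mul_walshSum (I : Finset ι) (J : Finset κ) (T : ι → Finset α)
    (U : κ → Finset α) :
    ∑ S, (∑ i ∈ I, walsh (T i) S) * ∑ j ∈ J, walsh (U j) S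
      = ∑ i ∈ I, ∑ j ∈ J, if T i = U j then 2 ^ Fintype.card α else 0 := by
  simp only [sum_mul_sum, walsh_mul_walsh]
  rw [sum_comm (s := univ) (t := I)]
  refine sum_congr rfl fun i _ => ?_
  rw [sum_comm (s := univ) (t := J)]
  simp only [sum_walsh, symmDiff_eq_empty]

lemma sum_walshSum_mul_walshSum_mul_walshSum (I : Finset ι) (J : Finset κ) (K : Finset μ)
    (T : ι → Finset α) (U : κ → Finset α) (V : μ → Finset α) :
    ∑ S, (∑ i ∈ I, walsh (T i) S) *
        ((∑ j ∈ J, walsh (U j) S) * ∑ k ∈ K, walsh (V k) S)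
      = ∑ i ∈ I, ∑ j ∈ J, ∑ k ∈ K,
          if T i = U j ∆ V k then 2 ^ Fintype.card α else 0 := by
  simp_rw [sum_mul_sum, mul_sum, walsh_mul_walsh]
  rw [sum_comm (s := univ) (t := I)]
  refine sum_congr rfl fun i _ => ?_
  rw [sum_comm (s := univ) (t := J)]
  refine sum_congr rfl fun j _ => ?_
  rw [sum_comm (s := univ) (t := K)]
  simp only [sum_walsh, symmDiff_eq_empty]

lemma sum_sum_ite_singleton_symmDiff_singleton {e : Finset α} (he : #e = 2) (c : ℝ) :
    ∑ u, ∑ v, (if e = {u} ∆ {v} then c else 0) = 2 * c := by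
  obtain ⟨a, b, hab, rfl⟩ := card_eq_two.1 he
  simp_rw [pair_eq_singleton_symmDiff_singleton_iff hab]
  rw [← Fintype.sum_prod_type'
    (f := fun u v => if (u, v) = (a, b) ∨ (u, v) = (b, a) then c else 0)]
  simp only [Prod.mk.eta]
  rw [← sum_filter, filter_or, filter_eq', filter_eq', if_pos (mem_univ _), if_pos (mem_univ _),
    sum_const, card_union_of_disjoint (by simp [hab]), card_singleton, card_singleton]
  norm_num

end Walsh

section EdgeCount

variable {α : Type*} [Fintype α] [DecidableEq α] {E : Finset (Finset α)} {d : ℕ}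

def edgeCount (E : Finset (Finset α)) (S : Finset α) : ℕ := #{e ∈ E | e ⊆ S}

def magnetization (S : Finset α) : ℝ := ∑ v, spin S v

def edgeWalsh (E : Finset (Finset α)) (S : Finset α) : ℝ := ∑ e ∈ E, walsh e S

lemma magnetization_eq_sum_walsh (S : Finset α) : magnetization S = ∑ v, walsh {v} S := by
  simp [magnetization, walsh]

lemma four_mul_edgeCount (hcard : ∀ e ∈ E, #e = 2) (hdeg : ∀ v, #{e ∈ E | v ∈ e} = d)
    (S : Finset α) :
    4 * (edgeCount E S : ℝ) = #E + d * magnetization S + edgeWalsh E S := by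
  have hdouble : ∑ e ∈ E, ∑ v ∈ e, spin S v = d * magnetization S := by
    rw [magnetization, mul_sum, sum_comm' (t' := univ) (s' := fun v => {e ∈ E | v ∈ e})
      (fun e v => by simp)]
    simp [hdeg]
  rw [edgeCount, natCast_card_filter, mul_sum,
    sum_congr rfl fun e he => four_mul_indicator_subset (hcard e he) S,
    sum_add_distrib, sum_add_distrib, hdouble, edgeWalsh]
  simp

lemma magnetization_compl (S : Finset α) : magnetization Sᶜ = -magnetization S := by
  simp [magnetization, spin_compl]

lemma edgeWalsh_compl (hcard : ∀ e ∈ E, #e = 2) (S : Finset α) :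
    edgeWalsh E Sᶜ = edgeWalsh E S :=
  sum_congr rfl fun e he => by rw [walsh_compl, hcard e he]; norm_num

lemma sum_cube_add_of_compl {a b : Finset α → ℝ} (ha : ∀ S, a Sᶜ = a S)
    (hb : ∀ S, b Sᶜ = -b S) :
    ∑ S, (a S + b S) ^ 3 = ∑ S, (a S ^ 3 + 3 * a S * b S ^ 2) := by
  have hcompl := Fintype.sum_equiv (compl_involutive (α := Finset α)).toPerm
    (fun S => (a Sᶜ + b Sᶜ) ^ 3) (fun S => (a S + b S) ^ 3) fun _ => by simp
  simp only [ha, hb] at hcompl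
  calc ∑ S, (a S + b S) ^ 3 = (∑ S, (a S + b S) ^ 3 + ∑ S, (a S + -b S) ^ 3) / 2 := by
        rw [hcompl]; ring
    _ = ∑ S, (a S ^ 3 + 3 * a S * b S ^ 2) := by
        rw [← sum_add_distrib, sum_div]
        exact sum_congr rfl fun S _ => by ring

lemma sum_edgeWalsh (hcard : ∀ e ∈ E, #e = 2) : ∑ S, edgeWalsh E S = 0 := by
  simp only [edgeWalsh]
  rw [sum_comm]
  refine sum_eq_zero fun e he => ?_
  rw [sum_walsh, if_neg]
  rintro rfl
  simpa using hcard ∅ he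

lemma sum_edgeWalsh_sq : ∑ S, edgeWalsh E S ^ 2 = #E * 2 ^ Fintype.card α :=
  calc ∑ S, edgeWalsh E S ^ 2 = ∑ S, edgeWalsh E S * edgeWalsh E S := by simp only [sq]
    _ = ∑ e ∈ E, ∑ f ∈ E, if e = f then 2 ^ Fintype.card α else 0 :=
        sum_walshSum_mul_walshSum E E _ _
    _ = #E * 2 ^ Fintype.card α := by simp

lemma sum_edgeWalsh_cube (htri : ∀ e ∈ E, ∀ f ∈ E, e ∆ f ∉ E) :
    ∑ S, edgeWalsh E S ^ 3 = 0 :=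
  calc ∑ S, edgeWalsh E S ^ 3 = ∑ S, edgeWalsh E S * (edgeWalsh E S * edgeWalsh E S) := by
        simp only [pow_three]
    _ = ∑ e ∈ E, ∑ f ∈ E, ∑ g ∈ E, if e = f ∆ g then 2 ^ Fintype.card α else 0 :=
        sum_walshSum_mul_walshSum_mul_walshSum E E E _ _ _
    _ = 0 := sum_eq_zero fun e he => sum_eq_zero fun f hf => sum_eq_zero fun g hg =>
        if_neg fun h : e = f ∆ g => htri f hf g hg (h ▸ he)

lemma sum_magnetization_sq :
    ∑ S : Finset α, magnetization S ^ 2 = Fintype.card α * 2 ^ Fintype.card α := by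
  simp_rw [sq, magnetization_eq_sum_walsh, sum_walshSum_mul_walshSum, singleton_inj, sum_ite_eq]
  simp

lemma sum_edgeWalsh_mul_magnetization_sq (hcard : ∀ e ∈ E, #e = 2) :
    ∑ S, edgeWalsh E S * magnetization S ^ 2 = 2 * #E * 2 ^ Fintype.card α := by
  simp_rw [sq, magnetization_eq_sum_walsh, edgeWalsh, sum_walshSum_mul_walshSum_mul_walshSum]
  rw [sum_congr rfl fun e he => sum_sum_ite_singleton_symmDiff_singleton (hcard e he) _]
  simp; ring

lemma two_mul_card_eq_mul_card (hcard : ∀ e ∈ E, #e = 2)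
    (hdeg : ∀ v, #{e ∈ E | v ∈ e} = d) : 2 * #E = d * Fintype.card α := by
  rw [mul_comm d, ← sum_card hdeg, sum_congr rfl hcard, sum_const, smul_eq_mul, mul_comm]

theorem sum_edgeCount_cube (hcard : ∀ e ∈ E, #e = 2) (hdeg : ∀ v, #{e ∈ E | v ∈ e} = d)
    (htri : ∀ e ∈ E, ∀ f ∈ E, e ∆ f ∉ E) :
    64 * ∑ S, (edgeCount E S : ℝ) ^ 3
      = 2 ^ Fintype.card α * ((#E : ℝ) ^ 3 + 3 * #E ^ 2 + 3 * d ^ 2 * Fintype.card α * #E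
          + 6 * d ^ 2 * #E) := by
  set N : ℝ := (#E : ℝ)
  calc 64 * ∑ S, (edgeCount E S : ℝ) ^ 3
      = ∑ S, ((N + edgeWalsh E S) + d * magnetization S) ^ 3 := by
        rw [mul_sum]
        refine sum_congr rfl fun S _ => ?_
        rw [add_right_comm, ← four_mul_edgeCount hcard hdeg]
        ring
    _ = ∑ S, ((N + edgeWalsh E S) ^ 3
          + 3 * (N + edgeWalsh E S) * (d * magnetization S) ^ 2) :=
        sum_cube_add_of_compl (fun S => by rw [edgeWalsh_compl hcard])
          (fun S => by rw [magnetization_compl, mul_neg])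
    _ = ∑ S : Finset α, N ^ 3 + 3 * N ^ 2 * ∑ S, edgeWalsh E S
          + 3 * N * ∑ S, edgeWalsh E S ^ 2 + ∑ S, edgeWalsh E S ^ 3
          + 3 * d ^ 2 * N * ∑ S : Finset α, magnetization S ^ 2
          + 3 * d ^ 2 * ∑ S, edgeWalsh E S * magnetization S ^ 2 := by
        simp only [mul_sum, ← sum_add_distrib]
        exact sum_congr rfl fun S _ => by ring
    _ = _ := by
        rw [sum_edgeWalsh hcard, sum_edgeWalsh_sq, sum_edgeWalsh_cube htri,
          sum_magnetization_sq, sum_edgeWalsh_mul_magnetization_sq hcard, sum_const, card_univ,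
          Fintype.card_finset]
        ring

end EdgeCount

section Hypercube

open Function

variable {n : ℕ}

lemma mem_word_one_iff {w : Fin n → Option Bool} :
    w ∈ Word n 1 ↔ ∃ x i, w = update (some ∘ x) i none := by
  simp only [Word, mem_filter, mem_univ, true_and, card_eq_one]
  constructor
  · rintro ⟨i, hi⟩
    refine ⟨fun j => (w j).getD false, i, eq_update_iff.2 ⟨?_, fun j hj => ?_⟩⟩
    · simpa using (Finset.ext_iff.1 hi i).2
    · exact (Option.getD_of_ne_none
        (fun h => hj (by simpa [h] using (Finset.ext_iff.1 hi j).1)) _).symm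
  · rintro ⟨x, i, rfl⟩
    exact ⟨i, by ext j; by_cases hj : j = i <;> simp [hj]⟩

lemma cube_update_some_none (x : Fin n → Bool) (i : Fin n) :
    cube (update (some ∘ x) i none) = {x, update x i (!x i)} := by
  ext y
  simp only [cube, mem_filter, mem_univ, true_and, mem_insert, mem_singleton]
  constructor
  · intro h
    have hy : ∀ j ≠ i, y j = x j := fun j hj => h j _ (by simp [update_of_ne hj])
    by_cases hyi : y i = x i
    · left
      funext j
      by_cases hj : j = i
      · rw [hj, hyi]
      · exact hy j hj
    · exact Or.inr (eq_update_iff.2 ⟨Bool.eq_not.2 hyi, hy⟩)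
  · rintro (rfl | rfl) j b hj <;> by_cases hji : j = i <;> simp_all [update_of_ne]

lemma some_eq_iff_forall_mem_cube {w : Fin n → Option Bool} {j : Fin n} {b : Bool} :
    w j = some b ↔ ∀ x ∈ cube w, x j = b := by
  refine ⟨fun h x hx => (mem_filter.1 hx).2 j b h, fun h => ?_⟩
  have hmem : (fun k => (w k).getD (!b)) ∈ cube w := by
    simp only [cube, mem_filter, mem_univ, true_and]
    intro k c hk
    simp [hk]
  have := h _ hmem
  cases hwj : w j <;> simp_all

lemma cube_injective : Injective (cube (n := n)) := by
  intro w v h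
  funext j
  exact Option.ext fun b => by rw [some_eq_iff_forall_mem_cube, some_eq_iff_forall_mem_cube, h]

def hypercubeEdges (n : ℕ) : Finset (Finset (Fin n → Bool)) := (Word n 1).image cube

lemma xr_one_eq_edgeCount (S : Finset (Fin n → Bool)) :
    Xr n 1 S = edgeCount (hypercubeEdges n) S := by
  rw [Xr, edgeCount, hypercubeEdges, filter_image, card_image_of_injective _ cube_injective]

lemma mem_hypercubeEdges {e : Finset (Fin n → Bool)} :
    e ∈ hypercubeEdges n ↔ ∃ x i, e = {x, update x i (!x i)} := by
  simp only [hypercubeEdges, mem_image, mem_word_one_iff]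
  constructor
  · rintro ⟨w, ⟨x, i, rfl⟩, rfl⟩
    exact ⟨x, i, cube_update_some_none x i⟩
  · rintro ⟨x, i, rfl⟩
    exact ⟨_, ⟨x, i, rfl⟩, cube_update_some_none x i⟩

lemma update_not_ne_self (x : Fin n → Bool) (i : Fin n) : update x i (!x i) ≠ x :=
  fun h => by simpa using congrFun h i

lemma card_of_mem_hypercubeEdges {e : Finset (Fin n → Bool)} (he : e ∈ hypercubeEdges n) :
    #e = 2 := by
  obtain ⟨x, i, rfl⟩ := mem_hypercubeEdges.1 he
  exact card_pair (update_not_ne_self x i).symm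

lemma filter_mem_hypercubeEdges (x : Fin n → Bool) :
    {e ∈ hypercubeEdges n | x ∈ e} = univ.image fun i => {x, update x i (!x i)} := by
  ext e
  simp only [mem_filter, mem_hypercubeEdges, mem_image, mem_univ, true_and]
  constructor
  · rintro ⟨⟨y, i, rfl⟩, hx⟩
    rcases mem_insert.1 hx with rfl | hx
    · exact ⟨i, rfl⟩
    · exact ⟨i, by rw [mem_singleton.1 hx, pair_comm]; simp⟩
  · rintro ⟨i, rfl⟩
    exact ⟨⟨x, i, rfl⟩, mem_insert_self _ _⟩

lemma injective_pair_update_not (x : Fin n → Bool) :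
    Injective fun i => ({x, update x i (!x i)} : Finset (Fin n → Bool)) := by
  intro i j h
  have hmem : update x i (!x i) ∈ ({x, update x j (!x j)} : Finset _) := by
    rw [← show ({x, update x i (!x i)} : Finset _) = {x, update x j (!x j)} from h]
    exact mem_insert_of_mem (mem_singleton_self _)
  rcases mem_insert.1 hmem with h' | h'
  · exact absurd h' (update_not_ne_self x i)
  · by_contra hij
    simpa [update_of_ne hij] using congrFun (mem_singleton.1 h') i

lemma card_filter_mem_hypercubeEdges (x : Fin n → Bool) :
    #{e ∈ hypercubeEdges n | x ∈ e} = n := by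
  rw [filter_mem_hypercubeEdges, card_image_of_injective _ (injective_pair_update_not x),
    card_univ, Fintype.card_fin]

def parity (x : Fin n → Bool) : ℝ := ∏ j, if x j then -1 else 1

lemma parity_mul_self (x : Fin n → Bool) : parity x * parity x = 1 := by
  rw [parity, ← prod_mul_distrib]
  exact prod_eq_one fun j _ => by split_ifs <;> norm_num

lemma parity_update_not (x : Fin n → Bool) (i : Fin n) :
    parity (update x i (!x i)) = -parity x := by
  rw [parity, parity, ← mul_prod_erase univ _ (mem_univ i),
    ← mul_prod_erase univ _ (mem_univ i),
    prod_congr rfl fun j hj => by rw [update_of_ne (ne_of_mem_erase hj)], update_self]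
  cases x i <;> simp

noncomputable def evenVertices (n : ℕ) : Finset (Fin n → Bool) := {x | parity x = 1}

lemma spin_evenVertices (x : Fin n → Bool) : spin (evenVertices n) x = parity x := by
  rw [spin]
  split_ifs with h
  · exact (mem_filter.1 h).2.symm
  · simp only [evenVertices, mem_filter, mem_univ, true_and] at h
    exact ((mul_self_eq_one_iff.1 (parity_mul_self x)).resolve_left h).symm

lemma walsh_evenVertices_of_mem_hypercubeEdges {e : Finset (Fin n → Bool)}
    (he : e ∈ hypercubeEdges n) : walsh e (evenVertices n) = -1 := by
  obtain ⟨x, i, rfl⟩ := mem_hypercubeEdges.1 he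
  rw [walsh, prod_pair (update_not_ne_self x i).symm, spin_evenVertices, spin_evenVertices,
    parity_update_not, mul_neg, parity_mul_self]

end Hypercube

end RandomSubset

open RandomSubset in
theorem third_moment_X1_general (n : ℕ) :
    Ex n (fun S => (Xr n 1 S : ℝ) ^ 3)
      = 2 ^ n * (n : ℝ) ^ 2 *
          (((2 : ℝ) ^ n) ^ 2 * n + 12 * 2 ^ n * n + 6 * 2 ^ n + 24 * n) / 512 := by
  have hV : Fintype.card (Fin n → Bool) = 2 ^ n := by simp
  have hcard (e) := card_of_mem_hypercubeEdges (n := n) (e := e)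
  have hmoment := sum_edgeCount_cube hcard card_filter_mem_hypercubeEdges
    (symmDiff_notMem_of_walsh_eq_neg_one fun _ => walsh_evenVertices_of_mem_hypercubeEdges)
  have hedges := two_mul_card_eq_mul_card hcard card_filter_mem_hypercubeEdges
  rw [hV] at hedges
  have hN : (#(hypercubeEdges n) : ℝ) = n * 2 ^ n / 2 := by
    rw [eq_div_iff two_ne_zero, mul_comm]
    exact_mod_cast hedges
  rw [hV, hN] at hmoment
  rw [Ex, Fintype.card_finset, hV]
  simp only [xr_one_eq_edgeCount]
  rw [div_eq_iff (by positivity)]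
  push_cast at hmoment ⊢
  linear_combination hmoment / 64

/-- Third moment of the number of edges contained in a uniformly random
subset of `{0,1}^n`. -/
theorem third_moment_X1 (n : ℕ) (hn : 1 ≤ n) :
    Ex n (fun S => (Xr n 1 S : ℝ) ^ 3)
      = 2 ^ n * (n : ℝ) ^ 2 *
          (((2 : ℝ) ^ n) ^ 2 * n + 12 * 2 ^ n * n + 6 * 2 ^ n + 24 * n) / 512 :=
  third_moment_X1_general n
end

section
/- As n → ∞, the scaled third central moment E[(X_1 − μ₁(n))³]/Var(X_1)^{3/2} tends to 0 and the scaled fourth central moment E[(X_1 − μ₁(n))⁴]/Var(X_1)² tends to 3, where X_1 is the number of edges contained in a uniformly random subset of {0,1}^n. -/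
open Finset

noncomputable def mean1 (n : ℕ) : ℝ := Ex n (fun S => (Xr n 1 S : ℝ))

noncomputable def var1 (n : ℕ) : ℝ :=
  Ex n (fun S => ((Xr n 1 S : ℝ) - mean1 n) ^ 2)

/-!
Write `X₁ - μ₁ = ∑ₑ Yₑ` with `Yₑ = 1[e ⊆ S] - 1/4`, the sum over the `N = n 2ⁿ⁻¹` edges `e` of
the cube. Each `Yₑ` depends only on `S ∩ e`, so the expectation of a product of `Y`'s factors as
soon as its edges split into two vertex-disjoint groups. Hence a term `E[Y_a Y_b Y_c]` of the third
moment, and a term of the fourth cumulant `E[(X₁ - μ₁)⁴] - 3 Var²`, vanishes unless all its edges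
lie within 2 (resp. 3) steps of the first one in the graph "sharing a vertex", whose degrees are at
most `2n`. This bounds the third moment by `N (2n)⁴` and the fourth cumulant by `4 N (2n)⁹`. As
all covariances are nonnegative, `Var ≥ ∑ₑ Var Yₑ = 3N/16`; since `N` grows like `2ⁿ`, the scaled
moments differ from `0` and `3` by `O(n⁴ / √N)` and `O(n⁹ / N)`.
-/

section Locality

variable {α : Type*} [DecidableEq α]

def DependsOnlyOn (A : Finset α) (f : Finset α → ℝ) : Prop :=
  ∀ S T, S ∩ A = T ∩ A → f S = f T

theorem DependsOnlyOn.mul {A B : Finset α} {f g : Finset α → ℝ} (hf : DependsOnlyOn A f)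
    (hg : DependsOnlyOn B g) : DependsOnlyOn (A ∪ B) (fun S => f S * g S) := by
  intro S T h
  have restrict : ∀ C ⊆ A ∪ B, S ∩ C = T ∩ C := fun C hC => by
    rw [← inter_eq_right.mpr hC, ← inter_assoc, h, inter_assoc]
  simp only [hf S T (restrict A subset_union_left), hg S T (restrict B subset_union_right)]

noncomputable def centeredInd (T S : Finset α) : ℝ := (if T ⊆ S then 1 else 0) - (2 ^ #T)⁻¹

theorem dependsOnlyOn_centeredInd (T : Finset α) : DependsOnlyOn T (centeredInd T) := by
  intro S S' h
  have hsub : ∀ U : Finset α, T ⊆ U ↔ T ⊆ U ∩ T := fun U => by simp [subset_inter_iff]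
  simp only [centeredInd, hsub S, hsub S', h]

theorem abs_centeredInd_le_one (T S : Finset α) : |centeredInd T S| ≤ 1 := by
  have hp : 0 < ((2 : ℝ) ^ #T)⁻¹ := by positivity
  have hp1 : ((2 : ℝ) ^ #T)⁻¹ ≤ 1 := inv_le_one_of_one_le₀ (one_le_pow₀ one_le_two)
  rw [centeredInd, abs_le]
  split_ifs <;> constructor <;> linarith

end Locality

section SubsetMean

variable {α : Type*} [Fintype α]

noncomputable def subsetMean (f : Finset α → ℝ) : ℝ :=
  (∑ S, f S) / Fintype.card (Finset α)

theorem card_finset_pos : (0 : ℝ) < Fintype.card (Finset α) := by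
  exact_mod_cast Fintype.card_pos

theorem subsetMean_const (c : ℝ) : subsetMean (fun _ : Finset α => c) = c := by
  simp [subsetMean]

theorem subsetMean_sum {ι : Type*} (s : Finset ι) (f : ι → Finset α → ℝ) :
    subsetMean (fun S => ∑ i ∈ s, f i S) = ∑ i ∈ s, subsetMean (f i) := by
  simp only [subsetMean, sum_comm (s := s), sum_div]

theorem subsetMean_sub (f g : Finset α → ℝ) :
    subsetMean (fun S => f S - g S) = subsetMean f - subsetMean g := by
  simp only [subsetMean, sum_sub_distrib, sub_div]

theorem subsetMean_mul_const (f : Finset α → ℝ) (c : ℝ) :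
    subsetMean (fun S => f S * c) = subsetMean f * c := by
  simp only [subsetMean, ← sum_mul, div_mul_eq_mul_div]

theorem abs_subsetMean_le {f : Finset α → ℝ} {M : ℝ} (h : ∀ S, |f S| ≤ M) :
    |subsetMean f| ≤ M := by
  rw [subsetMean, abs_div, abs_of_pos card_finset_pos, div_le_iff₀ card_finset_pos]
  calc |∑ S, f S| ≤ ∑ S, |f S| := abs_sum_le_sum_abs _ _
    _ ≤ ∑ _S : Finset α, M := sum_le_sum fun S _ => h S
    _ = M * Fintype.card (Finset α) := by simp [mul_comm]

variable [DecidableEq α]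

theorem subsetMean_ite_subset (T : Finset α) :
    subsetMean (fun S => if T ⊆ S then (1 : ℝ) else 0) = (2 ^ #T)⁻¹ := by
  have hcount : #{S | T ⊆ S} = 2 ^ (Fintype.card α - #T) := by
    rw [← card_univ, ← card_Icc_finset (subset_univ T)]
    congr 1
    ext S
    simp
  rw [subsetMean, sum_boole, hcount, Fintype.card_finset, Nat.cast_pow, Nat.cast_pow,
    Nat.cast_ofNat, pow_sub₀ _ two_ne_zero (card_le_univ T)]
  field_simp

theorem subsetMean_mul_of_disjoint {A B : Finset α} (hAB : Disjoint A B) {f g : Finset α → ℝ}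
    (hf : DependsOnlyOn A f) (hg : DependsOnlyOn B g) :
    subsetMean (fun S => f S * g S) = subsetMean f * subsetMean g := by
  -- `σ` swaps the parts of `S` and `T` outside `A`: an involution turning `f S * g T` into
  -- `f S' * g S'` with `S' = (σ (S, T)).1`
  set σ : Finset α × Finset α → Finset α × Finset α :=
    fun p => (p.1 ∩ A ∪ p.2 \ A, p.2 ∩ A ∪ p.1 \ A)
  have hσ : Function.Involutive σ := fun p => by
    ext x <;> simp only [σ, mem_union, mem_inter, mem_sdiff] <;> tauto
  have key : ∀ p : Finset α × Finset α, f p.1 * g p.2 = f (σ p).1 * g (σ p).1 := by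
    rintro ⟨S, T⟩
    congr 1
    · apply hf
      ext x; simp only [σ, mem_inter, mem_union, mem_sdiff]; tauto
    · apply hg
      ext x
      have hx := fun h : x ∈ A => disjoint_left.mp hAB h
      simp only [σ, mem_inter, mem_union, mem_sdiff]; tauto
  have hprod : (∑ S, f S) * (∑ T, g T) = Fintype.card (Finset α) * ∑ S, f S * g S := by
    rw [sum_mul_sum, ← Fintype.sum_prod_type',
      Fintype.sum_bijective σ hσ.bijective _ (fun p => f p.1 * g p.1) key,
      Fintype.sum_prod_type]
    simp [mul_sum]
  simp only [subsetMean]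
  rw [div_mul_div_comm, hprod]
  field_simp [card_finset_pos.ne']

theorem subsetMean_centeredInd (T : Finset α) : subsetMean (centeredInd T) = 0 := by
  unfold centeredInd
  rw [subsetMean_sub (fun S => if T ⊆ S then (1 : ℝ) else 0), subsetMean_ite_subset,
    subsetMean_const, sub_self]

theorem subsetMean_centeredInd_mul_eq_zero {T B : Finset α} (hTB : Disjoint T B)
    {g : Finset α → ℝ} (hg : DependsOnlyOn B g) :
    subsetMean (fun S => centeredInd T S * g S) = 0 := by
  rw [subsetMean_mul_of_disjoint hTB (dependsOnlyOn_centeredInd T) hg, subsetMean_centeredInd,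
    zero_mul]

end SubsetMean

section JointMoments

variable {α : Type*} [Fintype α] [DecidableEq α]

noncomputable def covInd (T U : Finset α) : ℝ :=
  subsetMean fun S => centeredInd T S * centeredInd U S

theorem covInd_comm (T U : Finset α) : covInd T U = covInd U T := by
  simp only [covInd, mul_comm]

theorem covInd_eq (T U : Finset α) :
    covInd T U = (2 ^ #(T ∪ U))⁻¹ - (2 ^ #T)⁻¹ * (2 ^ #U)⁻¹ := by
  have h : ∀ S, centeredInd T S * centeredInd U S =
      ((if T ∪ U ⊆ S then 1 else 0) - (if U ⊆ S then 1 else 0) * (2 ^ #T)⁻¹)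
        - centeredInd T S * (2 ^ #U)⁻¹ := fun S => by
    simp only [centeredInd, union_subset_iff]
    split_ifs <;> simp_all <;> ring
  rw [covInd, funext h, subsetMean_sub, subsetMean_sub, subsetMean_mul_const,
    subsetMean_mul_const, subsetMean_ite_subset, subsetMean_ite_subset, subsetMean_centeredInd]
  ring

theorem covInd_nonneg (T U : Finset α) : 0 ≤ covInd T U := by
  rw [covInd_eq, sub_nonneg, ← mul_inv, ← pow_add]
  exact inv_anti₀ (by positivity) (pow_le_pow_right₀ one_le_two (card_union_le T U))

theorem covInd_eq_zero_of_disjoint {T U : Finset α} (h : Disjoint T U) : covInd T U = 0 :=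
  subsetMean_centeredInd_mul_eq_zero h (dependsOnlyOn_centeredInd U)

theorem abs_covInd_le_one (T U : Finset α) : |covInd T U| ≤ 1 :=
  abs_subsetMean_le fun S => by
    rw [abs_mul]
    exact mul_le_one₀ (abs_centeredInd_le_one T S) (abs_nonneg _) (abs_centeredInd_le_one U S)

noncomputable def moment3 (T U V : Finset α) : ℝ :=
  subsetMean fun S => centeredInd T S * centeredInd U S * centeredInd V S

theorem moment3_comm12 (T U V : Finset α) : moment3 T U V = moment3 U T V := by
  simp only [moment3, mul_comm (centeredInd T _)]

theorem moment3_comm23 (T U V : Finset α) : moment3 T U V = moment3 T V U := by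
  simp only [moment3, mul_right_comm _ (centeredInd U _)]

theorem moment3_eq_zero_of_disjoint {T U V : Finset α} (h : Disjoint T (U ∪ V)) :
    moment3 T U V = 0 := by
  simp only [moment3, mul_assoc]
  exact subsetMean_centeredInd_mul_eq_zero h
    ((dependsOnlyOn_centeredInd U).mul (dependsOnlyOn_centeredInd V))

theorem abs_moment3_le_one (T U V : Finset α) : |moment3 T U V| ≤ 1 :=
  abs_subsetMean_le fun S => by
    simp only [abs_mul]
    exact mul_le_one₀ (mul_le_one₀ (abs_centeredInd_le_one T S) (abs_nonneg _)
      (abs_centeredInd_le_one U S)) (abs_nonneg _) (abs_centeredInd_le_one V S)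

noncomputable def cumulant4 (T U V W : Finset α) : ℝ :=
  subsetMean (fun S => centeredInd T S * centeredInd U S * centeredInd V S * centeredInd W S)
    - covInd T U * covInd V W - covInd T V * covInd U W - covInd T W * covInd U V

theorem cumulant4_comm12 (T U V W : Finset α) : cumulant4 T U V W = cumulant4 U T V W := by
  simp only [cumulant4, mul_comm (centeredInd T _), covInd_comm T U]
  ring

theorem cumulant4_comm23 (T U V W : Finset α) : cumulant4 T U V W = cumulant4 T V U W := by
  simp only [cumulant4, mul_right_comm _ (centeredInd U _), covInd_comm U V]
  ring

theorem cumulant4_comm34 (T U V W : Finset α) : cumulant4 T U V W = cumulant4 T U W V := by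
  simp only [cumulant4, mul_right_comm _ (centeredInd V _), covInd_comm V W]
  ring

theorem cumulant4_eq_zero_of_disjoint {T U V W : Finset α} (h : Disjoint T (U ∪ V ∪ W)) :
    cumulant4 T U V W = 0 := by
  simp only [disjoint_union_right] at h
  simp only [cumulant4, mul_assoc, covInd_eq_zero_of_disjoint h.1.1,
    covInd_eq_zero_of_disjoint h.1.2, covInd_eq_zero_of_disjoint h.2]
  rw [subsetMean_centeredInd_mul_eq_zero
    (disjoint_union_right.2 ⟨h.1.1, disjoint_union_right.2 ⟨h.1.2, h.2⟩⟩)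
    ((dependsOnlyOn_centeredInd U).mul
      ((dependsOnlyOn_centeredInd V).mul (dependsOnlyOn_centeredInd W)))]
  ring

theorem cumulant4_eq_zero_of_disjoint_pairs {T U V W : Finset α} (h : Disjoint (T ∪ U) (V ∪ W)) :
    cumulant4 T U V W = 0 := by
  have hsplit := subsetMean_mul_of_disjoint h
    ((dependsOnlyOn_centeredInd T).mul (dependsOnlyOn_centeredInd U))
    ((dependsOnlyOn_centeredInd V).mul (dependsOnlyOn_centeredInd W))
  simp only [disjoint_union_left, disjoint_union_right] at h
  simp only [← mul_assoc] at hsplit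
  rw [cumulant4, hsplit, covInd_eq_zero_of_disjoint h.1.1, covInd_eq_zero_of_disjoint h.1.2]
  simp only [covInd]
  ring

theorem abs_cumulant4_le_four (T U V W : Finset α) : |cumulant4 T U V W| ≤ 4 := by
  have hprod : ∀ S, |centeredInd T S * centeredInd U S * centeredInd V S * centeredInd W S| ≤ 1 :=
    fun S => by
      simp only [abs_mul]
      exact mul_le_one₀ (mul_le_one₀ (mul_le_one₀ (abs_centeredInd_le_one T S) (abs_nonneg _)
        (abs_centeredInd_le_one U S)) (abs_nonneg _) (abs_centeredInd_le_one V S))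
        (abs_nonneg _) (abs_centeredInd_le_one W S)
  have hcov : ∀ X Y Z Z' : Finset α, |covInd X Y * covInd Z Z'| ≤ 1 := fun X Y Z Z' => by
    rw [abs_mul]
    exact mul_le_one₀ (abs_covInd_le_one X Y) (abs_nonneg _) (abs_covInd_le_one Z Z')
  have h0 := abs_le.1 (abs_subsetMean_le hprod)
  have h1 := abs_le.1 (hcov T U V W)
  have h2 := abs_le.1 (hcov T V U W)
  have h3 := abs_le.1 (hcov T W U V)
  rw [cumulant4, abs_le]
  constructor <;> linarith

end JointMoments

theorem sum_pow_three {ι : Type*} (I : Finset ι) (x : ι → ℝ) :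
    (∑ i ∈ I, x i) ^ 3 = ∑ i ∈ I, ∑ j ∈ I, ∑ k ∈ I, x i * x j * x k := by
  rw [pow_succ, sq, sum_mul_sum]
  simp_rw [sum_mul, mul_sum]

theorem sum_pow_four {ι : Type*} (I : Finset ι) (x : ι → ℝ) :
    (∑ i ∈ I, x i) ^ 4 = ∑ i ∈ I, ∑ j ∈ I, ∑ k ∈ I, ∑ l ∈ I, x i * x j * x k * x l := by
  rw [pow_succ, sum_pow_three]
  simp_rw [sum_mul, mul_sum]

section SumMoments

variable {α ι : Type*} [Fintype α] [DecidableEq α] {A : ι → Finset α} {I : Finset ι}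

theorem subsetMean_sq_sum_centeredInd :
    subsetMean (fun S => (∑ i ∈ I, centeredInd (A i) S) ^ 2)
      = ∑ i ∈ I, ∑ j ∈ I, covInd (A i) (A j) := by
  simp only [sq, sum_mul_sum, subsetMean_sum, covInd]

theorem subsetMean_pow_three_sum_centeredInd :
    subsetMean (fun S => (∑ i ∈ I, centeredInd (A i) S) ^ 3)
      = ∑ i ∈ I, ∑ j ∈ I, ∑ k ∈ I, moment3 (A i) (A j) (A k) := by
  simp only [sum_pow_three, subsetMean_sum, moment3]

theorem subsetMean_pow_four_sum_centeredInd :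
    subsetMean (fun S => (∑ i ∈ I, centeredInd (A i) S) ^ 4)
        - 3 * subsetMean (fun S => (∑ i ∈ I, centeredInd (A i) S) ^ 2) ^ 2
      = ∑ i ∈ I, ∑ j ∈ I, ∑ k ∈ I, ∑ l ∈ I, cumulant4 (A i) (A j) (A k) (A l) := by
  set V := ∑ i ∈ I, ∑ j ∈ I, covInd (A i) (A j)
  have h12 : ∑ i ∈ I, ∑ j ∈ I, ∑ k ∈ I, ∑ l ∈ I, covInd (A i) (A j) * covInd (A k) (A l)
      = V ^ 2 := by simp only [V, sq, ← mul_sum, ← sum_mul]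
  have h13 : ∑ i ∈ I, ∑ j ∈ I, ∑ k ∈ I, ∑ l ∈ I, covInd (A i) (A k) * covInd (A j) (A l)
      = V ^ 2 := by simp only [V, sq, ← mul_sum, ← sum_mul]
  have h14 : ∑ i ∈ I, ∑ j ∈ I, ∑ k ∈ I, ∑ l ∈ I, covInd (A i) (A l) * covInd (A j) (A k)
      = V ^ 2 := by simp only [V, sq, ← mul_sum, ← sum_mul]
  rw [subsetMean_sq_sum_centeredInd]
  simp only [cumulant4, sum_sub_distrib, h12, h13, h14, sum_pow_four, subsetMean_sum]
  ring

theorem sum_covInd_self_le_subsetMean_sq :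
    ∑ i ∈ I, covInd (A i) (A i) ≤ subsetMean (fun S => (∑ i ∈ I, centeredInd (A i) S) ^ 2) := by
  rw [subsetMean_sq_sum_centeredInd]
  exact sum_le_sum fun i _ => single_le_sum (fun j _ => covInd_nonneg (A i) (A j)) ‹_›

end SumMoments

theorem sum_ite_mem_le_card {ι : Type*} [DecidableEq ι] (I K : Finset ι) :
    ∑ j ∈ I, (if j ∈ K then (1 : ℝ) else 0) ≤ #K := by
  rw [sum_boole]
  exact_mod_cast card_le_card fun j hj => (mem_filter.1 hj).2

section DependencyBall

variable {α ι : Type*} [DecidableEq α] [DecidableEq ι] (A : ι → Finset α) (I : Finset ι)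

def depNbhd (i : ι) : Finset ι := {j ∈ I | ¬Disjoint (A i) (A j)}

/-- The endpoints of the walks of length `k` from `i` in the graph on `I` joining `j` and `l`
whenever `A j` meets `A l`. -/
def depBall : ℕ → ι → Finset ι
  | 0, i => {i}
  | k + 1, i => (depBall k i).biUnion (depNbhd A I)

variable {A I}

theorem mem_depBall_succ {k : ℕ} {i j l : ι} (hj : j ∈ depBall A I k i) (hl : l ∈ I)
    (hjl : ¬Disjoint (A j) (A l)) : l ∈ depBall A I (k + 1) i :=
  mem_biUnion.2 ⟨j, hj, mem_filter.2 ⟨hl, hjl⟩⟩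

theorem mem_depBall_one {i j : ι} (hj : j ∈ I) (hij : ¬Disjoint (A i) (A j)) :
    j ∈ depBall A I 1 i :=
  mem_depBall_succ (mem_singleton_self i) hj hij

theorem depBall_subset {k : ℕ} {i : ι} (hi : i ∈ I) : depBall A I k i ⊆ I := by
  induction k with
  | zero => simpa [depBall] using hi
  | succ k _ => exact biUnion_subset.2 fun j _ => filter_subset _ _

theorem depBall_subset_succ (hne : ∀ j ∈ I, (A j).Nonempty) {k : ℕ} {i : ι} (hi : i ∈ I) :
    depBall A I k i ⊆ depBall A I (k + 1) i := fun j hj =>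
  have hjI := depBall_subset hi hj
  mem_depBall_succ hj hjI (by simpa [← nonempty_iff_ne_empty] using hne j hjI)

theorem card_depBall_le {D : ℕ} (hdeg : ∀ j ∈ I, #(depNbhd A I j) ≤ D) {i : ι} (hi : i ∈ I)
    (k : ℕ) : #(depBall A I k i) ≤ D ^ k := by
  induction k with
  | zero => simp [depBall]
  | succ k ih =>
    calc #(depBall A I (k + 1) i) ≤ ∑ j ∈ depBall A I k i, #(depNbhd A I j) := card_biUnion_le
      _ ≤ ∑ _j ∈ depBall A I k i, D := sum_le_sum fun j hj => hdeg j (depBall_subset hi hj)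
      _ ≤ D ^ (k + 1) := by rw [sum_const, smul_eq_mul, pow_succ]; gcongr

end DependencyBall

section DependencyBounds

variable {α ι : Type*} [Fintype α] [DecidableEq α] [DecidableEq ι] {A : ι → Finset α}
  {I : Finset ι}

theorem moment3_eq_zero_of_notMem_depBall (hne : ∀ j ∈ I, (A j).Nonempty) {i j k : ι}
    (hi : i ∈ I) (hj : j ∈ I) (hk : k ∈ I) (h : j ∉ depBall A I 2 i) :
    moment3 (A i) (A j) (A k) = 0 := by
  have hij : Disjoint (A i) (A j) :=
    not_not.1 fun hij => h (depBall_subset_succ hne hi (mem_depBall_one hj hij))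
  by_cases hik : Disjoint (A i) (A k)
  · exact moment3_eq_zero_of_disjoint (disjoint_union_right.2 ⟨hij, hik⟩)
  · have hkj : Disjoint (A k) (A j) :=
      not_not.1 fun hkj => h (mem_depBall_succ (mem_depBall_one hk hik) hj hkj)
    rw [moment3_comm12]
    exact moment3_eq_zero_of_disjoint (disjoint_union_right.2 ⟨hij.symm, hkj.symm⟩)

theorem cumulant4_eq_zero_of_notMem_depBall (hne : ∀ j ∈ I, (A j).Nonempty) {i j k l : ι}
    (hi : i ∈ I) (hj : j ∈ I) (hk : k ∈ I) (hl : l ∈ I) (h : j ∉ depBall A I 3 i) :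
    cumulant4 (A i) (A j) (A k) (A l) = 0 := by
  have mono : ∀ {m x}, x ∈ depBall A I m i → x ∈ depBall A I (m + 1) i :=
    fun hx => depBall_subset_succ hne hi hx
  have hij : Disjoint (A i) (A j) :=
    not_not.1 fun hij => h (mono (mono (mem_depBall_one hj hij)))
  -- if `i` meets `k`, then either `j` is isolated or `{i, k}` and `{j, l}` do not meet
  have of_meet : ∀ k l, k ∈ I → l ∈ I → ¬Disjoint (A i) (A k) →
      cumulant4 (A i) (A j) (A k) (A l) = 0 := by
    intro k l hk hl hik
    have hk1 := mem_depBall_one hk hik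
    have hkj : Disjoint (A k) (A j) :=
      not_not.1 fun hkj => h (mono (mem_depBall_succ hk1 hj hkj))
    by_cases hlj : Disjoint (A l) (A j)
    · rw [cumulant4_comm12]
      exact cumulant4_eq_zero_of_disjoint
        (disjoint_union_right.2 ⟨disjoint_union_right.2 ⟨hij.symm, hkj.symm⟩, hlj.symm⟩)
    · have hil : Disjoint (A i) (A l) :=
        not_not.1 fun hil => h (mem_depBall_succ (mono (mem_depBall_one hl hil)) hj hlj)
      have hkl : Disjoint (A k) (A l) :=
        not_not.1 fun hkl => h (mem_depBall_succ (mem_depBall_succ hk1 hl hkl) hj hlj)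
      rw [cumulant4_comm23]
      exact cumulant4_eq_zero_of_disjoint_pairs (disjoint_union_left.2
        ⟨disjoint_union_right.2 ⟨hij, hil⟩, disjoint_union_right.2 ⟨hkj, hkl⟩⟩)
  by_cases hik : Disjoint (A i) (A k)
  · by_cases hil : Disjoint (A i) (A l)
    · exact cumulant4_eq_zero_of_disjoint
        (disjoint_union_right.2 ⟨disjoint_union_right.2 ⟨hij, hik⟩, hil⟩)
    · rw [cumulant4_comm34]
      exact of_meet l k hl hk hil
  · exact of_meet k l hk hl hik

theorem abs_subsetMean_pow_three_sum_centeredInd_le (hne : ∀ j ∈ I, (A j).Nonempty) {D : ℕ}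
    (hdeg : ∀ j ∈ I, #(depNbhd A I j) ≤ D) :
    |subsetMean (fun S => (∑ i ∈ I, centeredInd (A i) S) ^ 3)| ≤ (#I : ℝ) * D ^ 4 := by
  set near : ι → ι → ℝ := fun i j => if j ∈ depBall A I 2 i then 1 else 0
  have hterm : ∀ i ∈ I, ∀ j ∈ I, ∀ k ∈ I,
      ‖moment3 (A i) (A j) (A k)‖ ≤ near i j * near i k := by
    intro i hi j hj k hk
    by_cases hjB : j ∈ depBall A I 2 i
    · by_cases hkB : k ∈ depBall A I 2 i
      · simpa [near, hjB, hkB] using abs_moment3_le_one (A i) (A j) (A k)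
      · rw [moment3_comm23, moment3_eq_zero_of_notMem_depBall hne hi hk hj hkB]
        simp [near, hkB]
    · rw [moment3_eq_zero_of_notMem_depBall hne hi hj hk hjB]
      simp [near, hjB]
  have hnear : ∀ i ∈ I, ∑ j ∈ I, near i j ≤ (D : ℝ) ^ 2 := fun i hi =>
    (sum_ite_mem_le_card I _).trans (by exact_mod_cast card_depBall_le hdeg hi 2)
  rw [subsetMean_pow_three_sum_centeredInd]
  calc ‖∑ i ∈ I, ∑ j ∈ I, ∑ k ∈ I, moment3 (A i) (A j) (A k)‖
      ≤ ∑ i ∈ I, ∑ j ∈ I, ∑ k ∈ I, near i j * near i k :=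
        norm_sum_le_of_le I fun i hi => norm_sum_le_of_le I fun j hj =>
          norm_sum_le_of_le I fun k hk => hterm i hi j hj k hk
    _ = ∑ i ∈ I, (∑ j ∈ I, near i j) ^ 2 := by simp only [sq, sum_mul_sum]
    _ ≤ ∑ _i ∈ I, ((D : ℝ) ^ 2) ^ 2 := sum_le_sum fun i hi => by
        gcongr
        exact hnear i hi
    _ = #I * D ^ 4 := by rw [sum_const, nsmul_eq_mul, ← pow_mul]

theorem abs_subsetMean_pow_four_sum_centeredInd_sub_le (hne : ∀ j ∈ I, (A j).Nonempty) {D : ℕ}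
    (hdeg : ∀ j ∈ I, #(depNbhd A I j) ≤ D) :
    |subsetMean (fun S => (∑ i ∈ I, centeredInd (A i) S) ^ 4)
        - 3 * subsetMean (fun S => (∑ i ∈ I, centeredInd (A i) S) ^ 2) ^ 2|
      ≤ 4 * (#I : ℝ) * D ^ 9 := by
  set near : ι → ι → ℝ := fun i j => if j ∈ depBall A I 3 i then 1 else 0
  have hterm : ∀ i ∈ I, ∀ j ∈ I, ∀ k ∈ I, ∀ l ∈ I,
      ‖cumulant4 (A i) (A j) (A k) (A l)‖ ≤ 4 * (near i j * near i k * near i l) := by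
    intro i hi j hj k hk l hl
    by_cases hjB : j ∈ depBall A I 3 i
    · by_cases hkB : k ∈ depBall A I 3 i
      · by_cases hlB : l ∈ depBall A I 3 i
        · simpa [near, hjB, hkB, hlB] using abs_cumulant4_le_four (A i) (A j) (A k) (A l)
        · rw [cumulant4_comm34, cumulant4_comm23,
            cumulant4_eq_zero_of_notMem_depBall hne hi hl hj hk hlB]
          simp [near, hlB]
      · rw [cumulant4_comm23, cumulant4_eq_zero_of_notMem_depBall hne hi hk hj hl hkB]
        simp [near, hkB]
    · rw [cumulant4_eq_zero_of_notMem_depBall hne hi hj hk hl hjB]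
      simp [near, hjB]
  have hnear : ∀ i ∈ I, ∑ j ∈ I, near i j ≤ (D : ℝ) ^ 3 := fun i hi =>
    (sum_ite_mem_le_card I _).trans (by exact_mod_cast card_depBall_le hdeg hi 3)
  rw [subsetMean_pow_four_sum_centeredInd]
  calc ‖∑ i ∈ I, ∑ j ∈ I, ∑ k ∈ I, ∑ l ∈ I, cumulant4 (A i) (A j) (A k) (A l)‖
      ≤ ∑ i ∈ I, ∑ j ∈ I, ∑ k ∈ I, ∑ l ∈ I, 4 * (near i j * near i k * near i l) :=
        norm_sum_le_of_le I fun i hi => norm_sum_le_of_le I fun j hj =>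
          norm_sum_le_of_le I fun k hk => norm_sum_le_of_le I fun l hl =>
            hterm i hi j hj k hk l hl
    _ = ∑ i ∈ I, 4 * (∑ j ∈ I, near i j) ^ 3 := by simp only [sum_pow_three, mul_sum]
    _ ≤ ∑ _i ∈ I, 4 * ((D : ℝ) ^ 3) ^ 3 := sum_le_sum fun i hi => by
        gcongr
        exact hnear i hi
    _ = 4 * #I * D ^ 9 := by rw [sum_const, nsmul_eq_mul, ← pow_mul]; ring

end DependencyBounds

open Filter Topology in
theorem tendsto_div_rpow_of_abs_le {x v : ℕ → ℝ} {c C s : ℝ} {k : ℕ} (hc : 0 < c) (hs : 0 < s)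
    (hv : ∀ᶠ m in atTop, c * 2 ^ m ≤ v m) (hx : ∀ m, |x m| ≤ C * m ^ k * v m) :
    Tendsto (fun m => x m / v m ^ (1 + s)) atTop (𝓝 0) := by
  have hlim := (tendsto_pow_const_div_const_pow_of_one_lt k
    (Real.one_lt_rpow one_lt_two hs)).const_mul (C / c ^ s)
  rw [mul_zero] at hlim
  refine squeeze_zero_norm' ?_ hlim
  filter_upwards [hv] with m hm
  have hv0 : 0 < v m := lt_of_lt_of_le (by positivity) hm
  have hvs : c ^ s * (2 ^ s) ^ m ≤ v m ^ s := by
    rw [Real.rpow_pow_comm zero_le_two, ← Real.mul_rpow hc.le (by positivity)]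
    exact Real.rpow_le_rpow (by positivity) hm hs.le
  have hC : 0 ≤ C * m ^ k := by
    have := (abs_nonneg (x m)).trans (hx m)
    exact nonneg_of_mul_nonneg_left this hv0
  rw [Real.norm_eq_abs, abs_div, abs_of_pos (Real.rpow_pos_of_pos hv0 _),
    Real.rpow_add hv0, Real.rpow_one, div_le_iff₀ (by positivity)]
  calc |x m| ≤ C * m ^ k * v m := hx m
    _ ≤ C / c ^ s * (m ^ k / (2 ^ s) ^ m) * (v m * v m ^ s) := by
        rw [show C / c ^ s * (m ^ k / (2 ^ s) ^ m) * (v m * v m ^ s)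
          = C * m ^ k * v m * (v m ^ s / (c ^ s * (2 ^ s) ^ m)) by field_simp]
        exact le_mul_of_one_le_right (mul_nonneg hC hv0.le)
          ((one_le_div (by positivity)).2 hvs)

section Hypercube

variable {n : ℕ}

theorem Ex_eq_subsetMean (f : Finset (Fin n → Bool) → ℝ) : Ex n f = subsetMean f := rfl

def edge (v : Fin n → Bool) (i : Fin n) : Fin n → Option Bool :=
  Function.update (fun k => some (v k)) i none

theorem mem_cube {x : Fin n → Bool} {w : Fin n → Option Bool} :
    x ∈ cube w ↔ ∀ i b, w i = some b → x i = b := by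
  simp [cube]

theorem mem_cube_edge {x v : Fin n → Bool} {i : Fin n} :
    x ∈ cube (edge v i) ↔ ∀ k, k ≠ i → x k = v k := by
  rw [mem_cube]
  refine forall_congr' fun k => ?_
  by_cases hk : k = i
  · subst hk; simp [edge]
  · simp [edge, hk, eq_comm]

theorem edge_eq_none_iff {v : Fin n → Bool} {i k : Fin n} : edge v i k = none ↔ k = i := by
  by_cases hk : k = i
  · subst hk; simp [edge]
  · simp [edge, hk]

theorem edge_mem_word (v : Fin n → Bool) (i : Fin n) : edge v i ∈ Word n 1 := by
  simp [Word, edge_eq_none_iff, filter_eq']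

theorem exists_edge_eq {w : Fin n → Option Bool} (hw : w ∈ Word n 1) :
    ∃ v i, edge v i = w := by
  obtain ⟨i, hi⟩ := card_eq_one.1 (mem_filter.1 hw).2
  have hnone : ∀ k, w k = none ↔ k = i := fun k => by
    simpa using congrArg (k ∈ ·) hi
  refine ⟨fun k => (w k).getD false, i, funext fun k => ?_⟩
  by_cases hk : k = i
  · subst hk; simp [edge, (hnone k).2 rfl]
  · rw [edge, Function.update_of_ne hk]
    cases hwk : w k with
    | none => exact absurd ((hnone k).1 hwk) hk
    | some b => rfl

theorem cube_edge (v : Fin n → Bool) (i : Fin n) :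
    cube (edge v i) = univ.image (Function.update v i) := by
  ext x
  simp only [mem_cube_edge, mem_image, mem_univ, true_and]
  constructor
  · intro hx
    exact ⟨x i, funext fun k => by
      by_cases hk : k = i
      · subst hk; simp
      · rw [Function.update_of_ne hk, hx k hk]⟩
  · rintro ⟨b, rfl⟩ k hk
    exact Function.update_of_ne hk b v

theorem card_cube_edge (v : Fin n → Bool) (i : Fin n) : #(cube (edge v i)) = 2 := by
  rw [cube_edge, card_image_of_injective _ (Function.update_injective v i), card_univ,
    Fintype.card_bool]

theorem edge_eq_of_mem_cube {x v : Fin n → Bool} {i : Fin n} (hx : x ∈ cube (edge v i)) :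
    edge x i = edge v i := by
  funext k
  by_cases hk : k = i
  · subst hk; simp [edge]
  · simp [edge, Function.update_of_ne hk, mem_cube_edge.1 hx k hk]

theorem card_cube_of_mem_word {w : Fin n → Option Bool} (hw : w ∈ Word n 1) : #(cube w) = 2 := by
  obtain ⟨v, i, rfl⟩ := exists_edge_eq hw
  exact card_cube_edge v i

theorem card_edges_through_le (x : Fin n → Bool) : #{w ∈ Word n 1 | x ∈ cube w} ≤ n := by
  -- every edge through `x` is `edge x i` for some direction `i`
  calc #{w ∈ Word n 1 | x ∈ cube w} ≤ #(univ.image (edge x)) := card_le_card fun w hw => by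
        obtain ⟨hw, hx⟩ := mem_filter.1 hw
        obtain ⟨v, i, rfl⟩ := exists_edge_eq hw
        exact mem_image.2 ⟨i, mem_univ _, edge_eq_of_mem_cube hx⟩
    _ ≤ n := card_image_le.trans (by simp)

theorem card_depNbhd_cube_le {w : Fin n → Option Bool} (hw : w ∈ Word n 1) :
    #(depNbhd cube (Word n 1) w) ≤ 2 * n := by
  calc #(depNbhd cube (Word n 1) w)
      ≤ #((cube w).biUnion fun x => {w' ∈ Word n 1 | x ∈ cube w'}) :=
        card_le_card fun w' hw' => by
        obtain ⟨hw', hmeet⟩ := mem_filter.1 hw'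
        obtain ⟨x, hx, hx'⟩ := not_disjoint_iff.1 hmeet
        exact mem_biUnion.2 ⟨x, hx, mem_filter.2 ⟨hw', hx'⟩⟩
    _ ≤ ∑ x ∈ cube w, #{w' ∈ Word n 1 | x ∈ cube w'} := card_biUnion_le
    _ ≤ ∑ _x ∈ cube w, n := sum_le_sum fun x _ => card_edges_through_le x
    _ = 2 * n := by rw [sum_const, card_cube_of_mem_word hw, smul_eq_mul]

theorem two_pow_le_two_mul_card_word (hn : 0 < n) : 2 ^ n ≤ 2 * #(Word n 1) := by
  calc 2 ^ n = #(univ : Finset (Fin n → Bool)) := by simp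
    _ ≤ #((Word n 1).biUnion cube) := card_le_card fun x _ =>
        mem_biUnion.2 ⟨_, edge_mem_word x ⟨0, hn⟩, mem_cube_edge.2 fun _ _ => rfl⟩
    _ ≤ ∑ w ∈ Word n 1, #(cube w) := card_biUnion_le
    _ = 2 * #(Word n 1) := by
        rw [sum_congr rfl fun w hw => card_cube_of_mem_word hw, sum_const, smul_eq_mul, mul_comm]

end Hypercube

section EdgeCount

variable {n : ℕ}

theorem X1_sub_mean1 (S : Finset (Fin n → Bool)) :
    (Xr n 1 S : ℝ) - mean1 n = ∑ w ∈ Word n 1, centeredInd (cube w) S := by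
  have hX : ∀ S, (Xr n 1 S : ℝ) = ∑ w ∈ Word n 1, if cube w ⊆ S then 1 else 0 := fun S =>
    natCast_card_filter _ _
  simp only [mean1, Ex_eq_subsetMean, hX, subsetMean_sum, subsetMean_ite_subset,
    ← sum_sub_distrib, centeredInd]

theorem var1_eq : var1 n = subsetMean fun S => (∑ w ∈ Word n 1, centeredInd (cube w) S) ^ 2 := by
  simp only [var1, Ex_eq_subsetMean, X1_sub_mean1]

theorem cube_nonempty_of_mem_word {w : Fin n → Option Bool} (hw : w ∈ Word n 1) :
    (cube w).Nonempty :=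
  card_pos.1 (by rw [card_cube_of_mem_word hw]; norm_num)

theorem card_word_le_var1 : 3 / 16 * (#(Word n 1) : ℝ) ≤ var1 n := by
  have hself : ∀ w ∈ Word n 1, covInd (cube w) (cube w) = 3 / 16 := fun w hw => by
    rw [covInd_eq, union_self, card_cube_of_mem_word hw]
    norm_num
  calc 3 / 16 * (#(Word n 1) : ℝ) = ∑ w ∈ Word n 1, covInd (cube w) (cube w) := by
        rw [sum_congr rfl hself, sum_const, nsmul_eq_mul, mul_comm]
    _ ≤ var1 n := var1_eq ▸ sum_covInd_self_le_subsetMean_sq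

theorem eventually_two_pow_le_var1 : ∀ᶠ m in Filter.atTop, 3 / 32 * (2 : ℝ) ^ m ≤ var1 m := by
  filter_upwards [Filter.eventually_gt_atTop 0] with m hm
  have h := two_pow_le_two_mul_card_word hm
  calc 3 / 32 * (2 : ℝ) ^ m ≤ 3 / 16 * (#(Word m 1) : ℝ) := by
        rw [show 3 / 32 * (2 : ℝ) ^ m = 3 / 16 * ((2 ^ m : ℕ) / 2 : ℝ) by push_cast; ring]
        gcongr
        rw [div_le_iff₀ two_pos]
        exact_mod_cast h.trans_eq (mul_comm _ _)
    _ ≤ var1 m := card_word_le_var1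

theorem abs_third_central_moment_X1_le :
    |Ex n (fun S => ((Xr n 1 S : ℝ) - mean1 n) ^ 3)| ≤ 16 / 3 * 2 ^ 4 * n ^ 4 * var1 n := by
  simp only [Ex_eq_subsetMean, X1_sub_mean1]
  calc _ ≤ (#(Word n 1) : ℝ) * ((2 * n : ℕ) : ℝ) ^ 4 :=
        abs_subsetMean_pow_three_sum_centeredInd_le (fun w hw => cube_nonempty_of_mem_word hw)
          (fun w hw => card_depNbhd_cube_le hw)
    _ ≤ 16 / 3 * var1 n * (2 * n) ^ 4 := by
        push_cast
        gcongr
        linarith [card_word_le_var1 (n := n)]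
    _ = 16 / 3 * 2 ^ 4 * n ^ 4 * var1 n := by ring

theorem abs_fourth_central_moment_X1_sub_le :
    |Ex n (fun S => ((Xr n 1 S : ℝ) - mean1 n) ^ 4) - 3 * var1 n ^ 2|
      ≤ 64 / 3 * 2 ^ 9 * n ^ 9 * var1 n := by
  have h := abs_subsetMean_pow_four_sum_centeredInd_sub_le (I := Word n 1)
    (fun w hw => cube_nonempty_of_mem_word hw) (fun w hw => card_depNbhd_cube_le hw)
  rw [← var1_eq] at h
  simp only [Ex_eq_subsetMean, X1_sub_mean1]
  calc _ ≤ 4 * (#(Word n 1) : ℝ) * ((2 * n : ℕ) : ℝ) ^ 9 := h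
    _ ≤ 4 * (16 / 3 * var1 n) * (2 * n) ^ 9 := by
        push_cast
        gcongr
        linarith [card_word_le_var1 (n := n)]
    _ = 64 / 3 * 2 ^ 9 * n ^ 9 * var1 n := by ring

end EdgeCount

/-- As `n → ∞`, the scaled third central moment of `X₁` tends to `0` and the
scaled fourth central moment tends to `3` (the corresponding normal moments). -/
theorem scaled_central_moments_X1 :
    Filter.Tendsto
        (fun n => Ex n (fun S => ((Xr n 1 S : ℝ) - mean1 n) ^ 3) / var1 n ^ ((3 : ℝ) / 2))
        Filter.atTop (nhds 0) ∧
    Filter.Tendsto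
        (fun n => Ex n (fun S => ((Xr n 1 S : ℝ) - mean1 n) ^ 4) / var1 n ^ 2)
        Filter.atTop (nhds 3) := by
  have hv := eventually_two_pow_le_var1
  constructor
  · convert tendsto_div_rpow_of_abs_le (by norm_num) (by norm_num : (0 : ℝ) < 1 / 2) hv
      fun n => abs_third_central_moment_X1_le using 4
    norm_num
  · have h := (tendsto_div_rpow_of_abs_le (by norm_num) one_pos hv
      fun n => abs_fourth_central_moment_X1_sub_le).add_const 3
    rw [zero_add] at h
    refine h.congr' ?_
    filter_upwards [hv] with n hn
    have hv0 : var1 n ≠ 0 := (lt_of_lt_of_le (by positivity) hn).ne'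
    rw [one_add_one_eq_two, Real.rpow_two]
    field_simp
    ring
end
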